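/- Let p₀,p₁,p₂,p₃ ≥ 0 with Σp_j = 1 and θ_j ∈ ℝ satisfy Σ_j p_j e^{2iθ_j} = 0 (i.e. the state z_j = √(p_j)e^{iθ_j} has zero 4-tangle). Then, writing t_m for the tangle of the m-th bipartite cut as given by t = 2(1 − Σ λ_j²) over the appropriate eigenvalue distributions, one has t₁ + t₂ + t₃ = 4, where t₁ = 2(1−Σ_j P_j²), t₂ = 2(1−Σ_j Q_j²), t₃ = 2(1−Σ_j R_j²) with P,Q,R defined from z via the orthogonal matrices A and B of the previous statement. -/

import Mathlib

/-! The tangles add up to `6 - 2 (Σ Pⱼ² + Σ Qⱼ² + Σ Rⱼ²)`, and for every `z ∈ ℂ⁴`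
`Σ Pⱼ² + Σ Qⱼ² + Σ Rⱼ² = (Σ |zⱼ|²)² + |Σ zⱼ²|² / 2`: once `|w|²` is written as `w w̄`, this is
a polynomial identity in `z` and `z̄`. Normalisation and zero 4-tangle make the right side `1`. -/

open Complex

noncomputable section

/-- The orthogonal matrix A. -/
def Amat : Matrix (Fin 4) (Fin 4) ℂ :=
  (1/2 : ℂ) • !![1,1,1,1; 1,1,-1,-1; 1,-1,1,-1; 1,-1,-1,1]

/-- The orthogonal matrix B. -/
def Bmat : Matrix (Fin 4) (Fin 4) ℂ :=
  (1/2 : ℂ) • !![1,-1,-1,-1; 1,-1,1,1; 1,1,-1,1; 1,1,1,-1]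

open Matrix

theorem Amat_mulVec (z : Fin 4 → ℂ) :
    Amat *ᵥ z = ![(z 0 + z 1 + z 2 + z 3) / 2, (z 0 + z 1 - z 2 - z 3) / 2,
      (z 0 - z 1 + z 2 - z 3) / 2, (z 0 - z 1 - z 2 + z 3) / 2] := by
  ext j
  fin_cases j <;>
    simp only [Amat, mulVec, dotProduct, Fin.sum_univ_four, Matrix.smul_apply, of_apply, cons_val',
      cons_val, cons_val_fin_one, smul_eq_mul, Fin.zero_eta, Fin.mk_one, Fin.reduceFinMk] <;> ring

theorem Bmat_mulVec (z : Fin 4 → ℂ) :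
    Bmat *ᵥ z = ![(z 0 - z 1 - z 2 - z 3) / 2, (z 0 - z 1 + z 2 + z 3) / 2,
      (z 0 + z 1 - z 2 + z 3) / 2, (z 0 + z 1 + z 2 - z 3) / 2] := by
  ext j
  fin_cases j <;>
    simp only [Bmat, mulVec, dotProduct, Fin.sum_univ_four, Matrix.smul_apply, of_apply, cons_val',
      cons_val, cons_val_fin_one, smul_eq_mul, Fin.zero_eta, Fin.mk_one, Fin.reduceFinMk] <;> ring

theorem sum_norm_pow_four_add_Amat_mulVec_add_Bmat_mulVec (z : Fin 4 → ℂ) :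
    ∑ j, ‖z j‖ ^ 4 + ∑ j, ‖(Amat *ᵥ z) j‖ ^ 4 + ∑ j, ‖(Bmat *ᵥ z) j‖ ^ 4
      = (∑ j, ‖z j‖ ^ 2) ^ 2 + ‖∑ j, z j ^ 2‖ ^ 2 / 2 := by
  have pow_four (x : ℝ) : x ^ 4 = (x ^ 2) ^ 2 := by ring
  simp only [Amat_mulVec, Bmat_mulVec, Fin.sum_univ_four, pow_four]
  apply Complex.ofReal_injective
  push_cast
  simp only [← Complex.mul_conj']
  simp only [map_add, map_sub, map_div₀, map_pow, map_ofNat]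
  ring

theorem norm_sq_ofReal_sqrt_mul_exp {p : ℝ} (hp : 0 ≤ p) (θ : ℝ) :
    ‖(Real.sqrt p : ℂ) * exp (θ * I)‖ ^ 2 = p := by
  rw [norm_mul, norm_exp_ofReal_mul_I, mul_one, Complex.norm_real, Real.norm_eq_abs,
    sq_abs, Real.sq_sqrt hp]

theorem ofReal_sqrt_mul_exp_sq {p : ℝ} (hp : 0 ≤ p) (θ : ℝ) :
    ((Real.sqrt p : ℂ) * exp (θ * I)) ^ 2 = p * exp (2 * θ * I) := by
  rw [mul_pow, ← Complex.ofReal_pow, Real.sq_sqrt hp, ← Complex.exp_nat_mul]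
  push_cast
  ring_nf

/-- For a state with zero 4-tangle (Σⱼ pⱼ e^{2iθⱼ} = 0), the three two-vs-two
    tangles sum to 4. -/
theorem sum_tangles_eq_four_of_zero_four_tangle
    (p : Fin 4 → ℝ) (θ : Fin 4 → ℝ)
    (hp : ∀ j, 0 ≤ p j) (hsum : ∑ j, p j = 1)
    (z : Fin 4 → ℂ)
    (hz : ∀ j, z j = Real.sqrt (p j) * Complex.exp (θ j * Complex.I))
    (h4tangle : ∑ j, p j * Complex.exp (2 * θ j * Complex.I) = 0) :
    (2 * (1 - ∑ j, (‖z j‖)^2 * (‖z j‖)^2)) +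
    (2 * (1 - ∑ j, (‖∑ k, Amat j k * z k‖)^2 * (‖∑ k, Amat j k * z k‖)^2)) +
    (2 * (1 - ∑ j, (‖∑ k, Bmat j k * z k‖)^2 * (‖∑ k, Bmat j k * z k‖)^2))
      = 4 := by
  have hnorm : ∑ j, ‖z j‖ ^ 2 = 1 := by
    simp only [hz, norm_sq_ofReal_sqrt_mul_exp (hp _), hsum]
  have hsq : ∑ j, z j ^ 2 = 0 := by
    simp only [hz, ofReal_sqrt_mul_exp_sq (hp _), h4tangle]
  have moments := sum_norm_pow_four_add_Amat_mulVec_add_Bmat_mulVec z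
  rw [hnorm, hsq, norm_zero] at moments
  simp only [mulVec, dotProduct] at moments
  simp only [← pow_add, Nat.reduceAdd]
  linarith
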